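/- For the 2^n points [1:±1:…:±1] of ℙ^n, the d-th symbolic power of their ideal equals the d-th ordinary power: ⋂_{ε ∈ {±1}^n} ℘_ε^d = ( ⋂_{ε ∈ {±1}^n} ℘_ε )^d for every d ≥ 1. -/

import Mathlib

/-!
Both sides equal `J^d` for the complete intersection `J = (x_i² - x₀²) ⊆ ⋂ ℘_ε`, and
`⋂ ℘_ε^d ⊆ J^d` is proved by induction on `n` and `d`. Dividing `f` by `x_n² - x₀²` in `x_n`
gives `f = g₀ + g₁ x_n + (x_n² - x₀²) w`. Restricting to the hyperplanes `x_n = ±x₀` puts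
`g₀ ± x₀ g₁` in every `℘_ε'^d`; as `x₀` is a nonzerodivisor modulo `℘_ε'^d`, induction on `n`
gives `g₀, g₁ ∈ J'^d`. Then `(x_n² - x₀²) w ∈ ℘_ε^d` for every `ε`. In coordinates centred at
`P_ε`, where `℘_ε^d` consists of the polynomials of order `≥ d`, the factor `x_n² - x₀²` becomes
`x_n (x_n ± 2x₀)`; multiplication by `x_n ± 2x₀` preserves the order, so `w ∈ ℘_ε^(d-1)`, and
induction on `d` gives `w ∈ J^(d-1)`.
-/

open MvPolynomial

/-- The vanishing ideal `℘_ε` of the point `[1:ε₁:…:εₙ] ∈ ℙⁿ`, generated by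
the linear forms `x_i − ε_i·x₀`, `i = 1,…,n`. -/
noncomputable def pIdeal (n : ℕ) (ε : Fin n → ℂ) :
    Ideal (MvPolynomial (Fin (n+1)) ℂ) :=
  Ideal.span { p | ∃ i : Fin n, p = X i.succ - C (ε i) * X (0 : Fin (n+1)) }

namespace MvPolynomial

variable {σ R : Type*}

section CommSemiring

variable [CommSemiring R]

lemma mem_pow_idealOfVars_of_X_mul {d : ℕ} {i : σ} {u : MvPolynomial σ R}
    (h : X i * u ∈ idealOfVars σ R ^ (d + 1)) : u ∈ idealOfVars σ R ^ d := by
  rw [mem_pow_idealOfVars_iff] at h ⊢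
  intro m hm
  have := h (Finsupp.single i 1 + m) (by rwa [mem_support_iff, coeff_X_mul, ← mem_support_iff])
  simp only [map_add, Finsupp.degree_single] at this
  omega

lemma mem_pow_idealOfVars_of_C_mul [NoZeroDivisors R] {d : ℕ} {a : R} (ha : a ≠ 0)
    {u : MvPolynomial σ R} (h : C a * u ∈ idealOfVars σ R ^ d) : u ∈ idealOfVars σ R ^ d := by
  rw [mem_pow_idealOfVars_iff] at h ⊢
  intro m hm
  exact h m (by simpa [mem_support_iff, coeff_C_mul, ha] using hm)

end CommSemiring

variable [CommRing R]

lemma mem_pow_idealOfVars_of_mul [NoZeroDivisors R] {d : ℕ} {a : R} (ha : a ≠ 0)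
    {r u : MvPolynomial σ R} (hr : r ∈ idealOfVars σ R)
    (h : (C a + r) * u ∈ idealOfVars σ R ^ d) : u ∈ idealOfVars σ R ^ d := by
  induction d with
  | zero => simp
  | succ d ih =>
    have hu := ih (Ideal.pow_le_pow_right d.le_succ h)
    have hru : r * u ∈ idealOfVars σ R ^ (d + 1) := by
      rw [pow_succ']
      exact Ideal.mul_mem_mul hr hu
    refine mem_pow_idealOfVars_of_C_mul ha ?_
    simpa [add_mul] using sub_mem h hru

noncomputable def translateVars (a : σ → R) : MvPolynomial σ R ≃ₐ[R] MvPolynomial σ R :=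
  AlgEquiv.ofAlgHom (aeval fun i => X i + C (a i)) (aeval fun i => X i - C (a i))
    (by ext i; simp) (by ext i; simp)

@[simp] lemma translateVars_X (a : σ → R) (i : σ) : translateVars a (X i) = X i + C (a i) := by
  simp [translateVars]

@[simp] lemma translateVars_C (a : σ → R) (r : R) : translateVars a (C r) = C r := by
  simp [translateVars]

lemma exists_eq_add_mul_X_last_add {m : ℕ} (p : MvPolynomial (Fin m) R)
    (f : MvPolynomial (Fin (m + 1)) R) :
    ∃ g₀ g₁ w : MvPolynomial _ R, f = rename Fin.castSucc g₀ + rename Fin.castSucc g₁ *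
      X (Fin.last m) + (X (Fin.last m) ^ 2 - rename Fin.castSucc p) * w := by
  induction f using MvPolynomial.induction_on with
  | C c => exact ⟨C c, 0, 0, by simp⟩
  | add f f' ih ih' =>
    obtain ⟨g₀, g₁, w, rfl⟩ := ih
    obtain ⟨g₀', g₁', w', rfl⟩ := ih'
    exact ⟨g₀ + g₀', g₁ + g₁', w + w', by simp only [map_add]; ring⟩
  | mul_X f i ih =>
    obtain ⟨g₀, g₁, w, rfl⟩ := ih
    induction i using Fin.lastCases with
    | last =>
      exact ⟨g₁ * p, g₀, rename Fin.castSucc g₁ + w * X (Fin.last m),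
        by simp only [map_mul]; ring⟩
    | cast j =>
      exact ⟨g₀ * X j, g₁ * X j, w * X j.castSucc, by simp only [map_mul, rename_X]; ring⟩

end MvPolynomial

lemma pIdeal_zero_eq_bot (ε : Fin 0 → ℂ) : pIdeal 0 ε = ⊥ := by
  simp [pIdeal]

noncomputable def quadric (n : ℕ) (i : Fin n) : MvPolynomial (Fin (n + 1)) ℂ :=
  X i.succ ^ 2 - X 0 ^ 2

noncomputable def quadricIdeal (n : ℕ) : Ideal (MvPolynomial (Fin (n + 1)) ℂ) :=
  Ideal.span (Set.range (quadric n))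

noncomputable def centeredAt {n : ℕ} (ε : Fin n → ℂ) :
    MvPolynomial (Fin (n + 1)) ℂ ≃ₐ[ℂ] MvPolynomial (Fin n) (Polynomial ℂ) :=
  ((renameEquiv ℂ (finSuccEquiv n)).trans (optionEquivRight ℂ (Fin n))).trans
    ((translateVars fun i => Polynomial.C (ε i) * Polynomial.X).restrictScalars ℂ)

section centeredAt

variable {n : ℕ} (ε : Fin n → ℂ)

@[simp] lemma centeredAt_X_zero : centeredAt ε (X 0) = C Polynomial.X := by
  simp [centeredAt]

@[simp] lemma centeredAt_X_succ (i : Fin n) :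
    centeredAt ε (X i.succ) = X i + C (Polynomial.C (ε i) * Polynomial.X) := by
  simp [centeredAt]

@[simp] lemma centeredAt_C (c : ℂ) :
    centeredAt ε (C c) = (C (Polynomial.C c) : MvPolynomial (Fin n) (Polynomial ℂ)) := by
  simp [centeredAt]

lemma map_centeredAt_pIdeal :
    Ideal.map (centeredAt ε) (pIdeal n ε) = idealOfVars (Fin n) (Polynomial ℂ) := by
  rw [pIdeal, Ideal.map_span]
  congr 1
  ext p
  simp

lemma mem_pIdeal_pow_iff {d : ℕ} {f : MvPolynomial (Fin (n + 1)) ℂ} :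
    f ∈ pIdeal n ε ^ d ↔ centeredAt ε f ∈ idealOfVars (Fin n) (Polynomial ℂ) ^ d := by
  rw [← map_centeredAt_pIdeal, ← Ideal.map_pow]
  exact (Ideal.apply_mem_of_equiv_iff (f := (centeredAt ε).toRingEquiv)).symm

lemma mem_pIdeal_pow_of_X_zero_mul {d : ℕ} {u : MvPolynomial (Fin (n + 1)) ℂ}
    (h : X 0 * u ∈ pIdeal n ε ^ d) : u ∈ pIdeal n ε ^ d := by
  rw [mem_pIdeal_pow_iff] at h ⊢
  refine mem_pow_idealOfVars_of_mul Polynomial.X_ne_zero (zero_mem _) ?_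
  simpa using h

lemma centeredAt_quadric {i : Fin n} (hε : ε i ^ 2 = 1) :
    centeredAt ε (quadric n i) =
      X i * (C (Polynomial.C (2 * ε i) * Polynomial.X) + X i) := by
  have hC : (C (Polynomial.C (ε i)) : MvPolynomial (Fin n) (Polynomial ℂ)) ^ 2 = 1 := by
    rw [← map_pow, ← map_pow, hε, map_one, map_one]
  simp only [quadric, map_sub, map_pow, centeredAt_X_succ, centeredAt_X_zero, map_mul, map_ofNat]
  linear_combination (C Polynomial.X ^ 2 : MvPolynomial (Fin n) (Polynomial ℂ)) * hC

lemma quadric_mem_pIdeal {i : Fin n} (hε : ε i ^ 2 = 1) : quadric n i ∈ pIdeal n ε := by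
  rw [← pow_one (pIdeal n ε), mem_pIdeal_pow_iff, pow_one, centeredAt_quadric ε hε]
  exact Ideal.mul_mem_right _ _ (Ideal.subset_span ⟨i, rfl⟩)

lemma mem_pIdeal_pow_of_quadric_mul {d : ℕ} {i : Fin n} (hε : ε i ^ 2 = 1)
    {w : MvPolynomial (Fin (n + 1)) ℂ} (h : quadric n i * w ∈ pIdeal n ε ^ (d + 1)) :
    w ∈ pIdeal n ε ^ d := by
  have hε0 : ε i ≠ 0 := by
    rintro h0
    simp [h0] at hε
  rw [mem_pIdeal_pow_iff, map_mul, centeredAt_quadric ε hε, mul_assoc] at h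
  rw [mem_pIdeal_pow_iff]
  exact mem_pow_idealOfVars_of_mul (mul_ne_zero (by simpa using hε0) Polynomial.X_ne_zero)
    (Ideal.subset_span ⟨i, rfl⟩) (mem_pow_idealOfVars_of_X_mul h)

end centeredAt

noncomputable def evalLast {n : ℕ} (s : ℂ) :
    MvPolynomial (Fin (n + 2)) ℂ →ₐ[ℂ] MvPolynomial (Fin (n + 1)) ℂ :=
  aeval (Fin.lastCases (C s * X 0) X)

section evalLast

variable {n : ℕ} (s : ℂ)

@[simp] lemma evalLast_rename (g : MvPolynomial (Fin (n + 1)) ℂ) :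
    evalLast s (rename Fin.castSucc g) = g := by
  rw [evalLast, aeval_rename]
  convert aeval_X_left_apply g using 2
  ext i
  simp

@[simp] lemma evalLast_X_last : evalLast s (X (Fin.last (n + 1))) = C s * X 0 := by
  simp [evalLast]

@[simp] lemma evalLast_X_zero : evalLast s (X 0) = (X 0 : MvPolynomial (Fin (n + 1)) ℂ) := by
  simpa using evalLast_rename s (X 0)

lemma evalLast_quadric_last (hs : s ^ 2 = 1) :
    evalLast s (quadric (n + 1) (Fin.last n)) = 0 := by
  have hC : (C s : MvPolynomial (Fin (n + 1)) ℂ) ^ 2 = 1 := by rw [← map_pow, hs, map_one]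
  simp only [quadric, Fin.succ_last, map_sub, map_pow, evalLast_X_last, evalLast_X_zero]
  linear_combination (X 0 : MvPolynomial (Fin (n + 1)) ℂ) ^ 2 * hC

lemma map_evalLast_pIdeal_le (ε : Fin n → ℂ) :
    Ideal.map (evalLast s) (pIdeal (n + 1) (Fin.snoc ε s)) ≤ pIdeal n ε := by
  rw [pIdeal, Ideal.map_span, Ideal.span_le]
  rintro _ ⟨_, ⟨i, rfl⟩, rfl⟩
  induction i using Fin.lastCases with
  | last => simp
  | cast j =>
    refine Ideal.subset_span ⟨j, ?_⟩
    simpa [← Fin.succ_castSucc] using evalLast_rename s (X j.succ)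

end evalLast

section quadricIdeal

variable {n : ℕ}

lemma quadricIdeal_le_pIdeal {ε : Fin n → ℂ} (hε : ∀ i, ε i ^ 2 = 1) :
    quadricIdeal n ≤ pIdeal n ε :=
  Ideal.span_le.2 <| Set.range_subset_iff.2 fun i => quadric_mem_pIdeal ε (hε i)

lemma rename_mem_quadricIdeal_pow {d : ℕ} {g : MvPolynomial (Fin (n + 1)) ℂ}
    (hg : g ∈ quadricIdeal n ^ d) : rename Fin.castSucc g ∈ quadricIdeal (n + 1) ^ d := by
  have hle : Ideal.map (rename Fin.castSucc) (quadricIdeal n) ≤ quadricIdeal (n + 1) := by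
    rw [quadricIdeal, Ideal.map_span, Ideal.span_le]
    rintro _ ⟨_, ⟨i, rfl⟩, rfl⟩
    exact Ideal.subset_span ⟨i.castSucc, by simp [quadric]⟩
  have := Ideal.mem_map_of_mem (rename (R := ℂ) Fin.castSucc) hg
  rw [Ideal.map_pow] at this
  exact Ideal.pow_right_mono hle d this

lemma mem_pIdeal_pow_of_add_mul_X_last_add {d : ℕ} {ε : Fin n → ℂ}
    {g₀ g₁ : MvPolynomial (Fin (n + 1)) ℂ} {w : MvPolynomial (Fin (n + 2)) ℂ}
    (h : ∀ s : ℂ, (s = 1 ∨ s = -1) → rename Fin.castSucc g₀ + rename Fin.castSucc g₁ *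
      X (Fin.last (n + 1)) + quadric (n + 1) (Fin.last n) * w ∈ pIdeal (n + 1) (Fin.snoc ε s) ^ d) :
    g₀ ∈ pIdeal n ε ^ d ∧ g₁ ∈ pIdeal n ε ^ d := by
  have hrestrict (s : ℂ) (hs : s = 1 ∨ s = -1) : g₀ + g₁ * (C s * X 0) ∈ pIdeal n ε ^ d := by
    have := Ideal.mem_map_of_mem (evalLast s) (h s hs)
    rw [Ideal.map_pow] at this
    simpa [evalLast_quadric_last s (sq_eq_one_iff.2 hs)] using
      Ideal.pow_right_mono (map_evalLast_pIdeal_le s ε) d this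
  have hpos := hrestrict 1 (.inl rfl)
  have hneg := hrestrict (-1) (.inr rfl)
  have h2 : IsUnit (2 : MvPolynomial (Fin (n + 1)) ℂ) := by
    rw [← map_ofNat C 2]
    exact (isUnit_of_invertible _).map C
  constructor
  · rw [← Ideal.unit_mul_mem_iff_mem _ h2]
    convert add_mem hpos hneg using 1
    simp only [map_neg, map_one]
    ring
  · rw [← Ideal.unit_mul_mem_iff_mem _ h2]
    refine mem_pIdeal_pow_of_X_zero_mul ε ?_
    convert sub_mem hpos hneg using 1
    simp only [map_neg, map_one]
    ring

theorem mem_quadricIdeal_pow {d : ℕ} {f : MvPolynomial (Fin (n + 1)) ℂ}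
    (hf : ∀ ε : Fin n → ℂ, (∀ i, ε i = 1 ∨ ε i = -1) → f ∈ pIdeal n ε ^ d) :
    f ∈ quadricIdeal n ^ d := by
  induction n generalizing d with
  | zero =>
    rcases d with _ | d
    · simp
    · have := hf Fin.elim0 finZeroElim
      rw [pIdeal_zero_eq_bot, Ideal.bot_pow d.succ_ne_zero, Ideal.mem_bot] at this
      simp [this]
  | succ n ihn =>
    induction d generalizing f with
    | zero => simp
    | succ d ihd =>
      obtain ⟨g₀, g₁, w, rfl⟩ := exists_eq_add_mul_X_last_add (X 0 ^ 2) f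
      have hq : X (Fin.last (n + 1)) ^ 2 - rename Fin.castSucc (X 0 ^ 2) =
          quadric (n + 1) (Fin.last n) := by
        simp [quadric]
      rw [hq] at hf ⊢
      have hg (ε : Fin n → ℂ) (hε : ∀ i, ε i = 1 ∨ ε i = -1) :=
        mem_pIdeal_pow_of_add_mul_X_last_add fun s hs =>
          hf (Fin.snoc ε s) (Fin.lastCases (by simpa using hs) fun j => by simpa using hε j)
      have hr : rename Fin.castSucc g₀ + rename Fin.castSucc g₁ * X (Fin.last (n + 1)) ∈
          quadricIdeal (n + 1) ^ (d + 1) :=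
        add_mem (rename_mem_quadricIdeal_pow (ihn fun ε hε => (hg ε hε).1))
          (Ideal.mul_mem_right _ _ (rename_mem_quadricIdeal_pow (ihn fun ε hε => (hg ε hε).2)))
      have hw : w ∈ quadricIdeal (n + 1) ^ d := ihd fun ε hε => by
        have hε2 i := sq_eq_one_iff.2 (hε i)
        refine mem_pIdeal_pow_of_quadric_mul ε (hε2 _) ((Ideal.add_mem_iff_right _ ?_).1 (hf ε hε))
        exact Ideal.pow_right_mono (quadricIdeal_le_pIdeal hε2) _ hr
      refine add_mem hr ?_
      rw [pow_succ']
      exact Ideal.mul_mem_mul (Ideal.subset_span ⟨_, rfl⟩) hw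

end quadricIdeal

theorem stmt16_general (n d : ℕ) :
    (⨅ ε : {ε : Fin n → ℂ // ∀ i, ε i = 1 ∨ ε i = -1}, (pIdeal n ε.1) ^ d)
      = (⨅ ε : {ε : Fin n → ℂ // ∀ i, ε i = 1 ∨ ε i = -1}, pIdeal n ε.1) ^ d := by
  refine le_antisymm (fun f hf => ?_) (le_iInf fun ε => Ideal.pow_right_mono (iInf_le _ ε) d)
  refine Ideal.pow_right_mono (le_iInf fun ε => ?_) d
    (mem_quadricIdeal_pow fun ε hε => Ideal.mem_iInf.1 hf ⟨ε, hε⟩)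
  exact quadricIdeal_le_pIdeal fun i => sq_eq_one_iff.2 (ε.2 i)

theorem stmt16 (n d : ℕ) (hn : 1 ≤ n) (hd : 1 ≤ d) :
    (⨅ ε : {ε : Fin n → ℂ // ∀ i, ε i = 1 ∨ ε i = -1}, (pIdeal n ε.1) ^ d)
      = (⨅ ε : {ε : Fin n → ℂ // ∀ i, ε i = 1 ∨ ε i = -1}, pIdeal n ε.1) ^ d :=
  stmt16_general n d
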